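/- arXiv:1305.0045 — 2 statements merged into one kernel-verified Lean document; each statement's English description precedes it below -/
import Mathlib

section
/- Let B be a unital C*-algebra with the following two properties: (1) there is a constant V > 0 such that every b ∈ B is a finite linear combination b = Σ λ_j p_j of projections p_j ∈ B with Σ |λ_j| ≤ V‖b‖; (2) the set of positive combinations of projections is norm-dense in the positive cone B₊. Then every positive invertible element of B is a finite positive combination of projections. -/
/-!
Shift the spectrum down: if `δ • 1 ≤ a` with `δ > 0`, approximate `a - δ • 1 ≥ 0` by a positive
combination of projections `t` to within `δ / V`. The error `r` is self-adjoint, so the controlled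
expansion `r = ∑ λⱼ pⱼ` may be taken with real coefficients `μⱼ` satisfying `∑ |μⱼ| ≤ δ`. Each
`μⱼ pⱼ + |μⱼ| • 1` is a positive combination of `pⱼ` or of `1 - pⱼ`, and the remaining
`(δ - ∑ |μⱼ|) • 1` is a nonnegative multiple of `1`, so `a = t + r + δ • 1` is one as well.
-/

/-- `a` is a (finite) positive combination of projections in `B`. -/
def IsPCP {B : Type*} [Ring B] [StarRing B] [SMul ℝ B] (a : B) : Prop :=
  ∃ (n : ℕ) (lam : Fin n → ℝ) (p : Fin n → B),
    (∀ j, 0 < lam j) ∧ (∀ j, IsIdempotentElem (p j) ∧ IsSelfAdjoint (p j)) ∧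
    a = ∑ j, lam j • p j

section IsPCP

variable {B : Type*} [Ring B] [StarRing B] [Module ℝ B]

lemma isPCP_zero : IsPCP (0 : B) :=
  ⟨0, Fin.elim0, Fin.elim0, Fin.rec0, Fin.rec0, by simp⟩

lemma IsPCP.add {x y : B} (hx : IsPCP x) (hy : IsPCP y) : IsPCP (x + y) := by
  obtain ⟨n, lam, p, hlam, hp, rfl⟩ := hx
  obtain ⟨m, mu, q, hmu, hq, rfl⟩ := hy
  refine ⟨n + m, Fin.append lam mu, Fin.append p q,
    Fin.addCases (by simpa only [Fin.append_left]) (by simpa only [Fin.append_right]),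
    Fin.addCases (by simpa only [Fin.append_left]) (by simpa only [Fin.append_right]), ?_⟩
  simp only [Fin.sum_univ_add, Fin.append_left, Fin.append_right]

lemma isPCP_sum {ι : Type*} (s : Finset ι) {f : ι → B} (hf : ∀ i ∈ s, IsPCP (f i)) :
    IsPCP (∑ i ∈ s, f i) :=
  Finset.sum_induction f IsPCP (fun _ _ ↦ IsPCP.add) isPCP_zero hf

lemma IsStarProjection.isPCP_smul {p : B} (hp : IsStarProjection p) {c : ℝ} (hc : 0 ≤ c) :
    IsPCP (c • p) := by
  rcases hc.eq_or_lt with rfl | hc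
  · simpa using isPCP_zero
  · exact ⟨1, fun _ ↦ c, fun _ ↦ p, fun _ ↦ hc, fun _ ↦ ⟨hp.isIdempotentElem, hp.isSelfAdjoint⟩,
      by simp⟩

lemma isPCP_smul_one {c : ℝ} (hc : 0 ≤ c) : IsPCP (c • (1 : B)) :=
  (IsStarProjection.one B).isPCP_smul hc

lemma IsStarProjection.isPCP_smul_add_abs_smul_one {p : B} (hp : IsStarProjection p) (μ : ℝ) :
    IsPCP (μ • p + |μ| • (1 : B)) := by
  rcases le_total 0 μ with hμ | hμ
  · rw [abs_of_nonneg hμ]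
    exact (hp.isPCP_smul hμ).add (isPCP_smul_one hμ)
  · have h : μ • p + |μ| • (1 : B) = (-μ) • (1 - p) := by
      rw [abs_of_nonpos hμ]
      module
    exact h ▸ hp.one_sub.isPCP_smul (neg_nonneg.2 hμ)

lemma isPCP_sum_smul_add_smul_one {ι : Type*} (s : Finset ι) {p : ι → B}
    (hp : ∀ i ∈ s, IsStarProjection (p i)) {μ : ι → ℝ} {c : ℝ} (hc : ∑ i ∈ s, |μ i| ≤ c) :
    IsPCP (∑ i ∈ s, μ i • p i + c • (1 : B)) := by
  have h : ∑ i ∈ s, μ i • p i + c • (1 : B) =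
      ∑ i ∈ s, (μ i • p i + |μ i| • 1) + (c - ∑ i ∈ s, |μ i|) • 1 := by
    rw [Finset.sum_add_distrib, ← Finset.sum_smul]
    module
  rw [h]
  exact (isPCP_sum s fun i hi ↦ (hp i hi).isPCP_smul_add_abs_smul_one (μ i)).add
    (isPCP_smul_one (sub_nonneg.2 hc))

lemma IsPCP.isSelfAdjoint [StarModule ℝ B] {x : B} (hx : IsPCP x) : IsSelfAdjoint x := by
  obtain ⟨n, lam, p, -, hp, rfl⟩ := hx
  exact isSelfAdjoint_sum _ fun j _ ↦ (IsSelfAdjoint.all (lam j)).smul (hp j).2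

end IsPCP

lemma IsSelfAdjoint.eq_sum_re_smul {A : Type*} [AddCommGroup A] [Module ℂ A]
    [StarAddMonoid A] [StarModule ℂ A] {ι : Type*} (s : Finset ι) {x : A} (hx : IsSelfAdjoint x)
    {c : ι → ℂ} {p : ι → A} (hp : ∀ i ∈ s, IsSelfAdjoint (p i)) (hx_eq : x = ∑ i ∈ s, c i • p i) :
    x = ∑ i ∈ s, (c i).re • p i := by
  rw [← hx.coe_realPart, hx_eq, map_sum, AddSubgroup.val_finsetSum]
  refine Finset.sum_congr rfl fun i hi ↦ ?_
  simp [realPart_smul, (hp i hi).coe_realPart, (hp i hi).imaginaryPart]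

lemma IsStrictlyPositive.exists_pos_algebraMap_le {A : Type*} [TopologicalSpace A] [Ring A]
    [StarRing A] [PartialOrder A] [StarOrderedRing A] [Algebra ℝ A] [NonnegSpectrumClass ℝ A]
    [ContinuousFunctionalCalculus ℝ A IsSelfAdjoint] {a : A} (ha : IsStrictlyPositive a) :
    ∃ r > 0, algebraMap ℝ A r ≤ a := by
  rcases subsingleton_or_nontrivial A with hA | hA
  · exact ⟨1, one_pos, (Subsingleton.elim _ _).le⟩
  exact (CFC.exists_pos_algebraMap_le_iff ha.isSelfAdjoint).2 fun x hx ↦ ha.spectrum_pos hx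

/-- Fong–Murphy-type criterion: in a unital C*-algebra in which (1) every element is a
linear combination of projections with control `∑ |λ_j| ≤ V‖b‖` on the coefficients, and
(2) positive combinations of projections are norm-dense in the positive cone, every
positive invertible element is a positive combination of projections. -/
theorem pos_invertible_isPCP {B : Type*} [CStarAlgebra B] [PartialOrder B]
    [StarOrderedRing B] (V : ℝ) (hV : 0 < V)
    (hspan : ∀ b : B, ∃ (n : ℕ) (lam : Fin n → ℂ) (p : Fin n → B),
      (∀ j, IsIdempotentElem (p j) ∧ IsSelfAdjoint (p j)) ∧
      b = ∑ j, lam j • p j ∧ ∑ j, ‖lam j‖ ≤ V * ‖b‖)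
    (hdense : ∀ b : B, 0 ≤ b → ∀ ε > (0 : ℝ), ∃ t : B, IsPCP t ∧ ‖b - t‖ < ε) :
    ∀ a : B, 0 ≤ a → IsUnit a → IsPCP a := by
  intro a ha hu
  obtain ⟨δ, hδ, hδa⟩ := (hu.isStrictlyPositive ha).exists_pos_algebraMap_le
  obtain ⟨t, ht, hta⟩ := hdense (a - algebraMap ℝ B δ) (sub_nonneg.2 hδa) (δ / V) (by positivity)
  set r := a - algebraMap ℝ B δ - t with hr_def
  obtain ⟨n, lam, p, hp, hr, hlam⟩ := hspan r
  have hr_re : r = ∑ j, (lam j).re • p j :=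
    (ha.isSelfAdjoint.sub (.algebraMap B (.all δ)) |>.sub ht.isSelfAdjoint).eq_sum_re_smul _
      (fun j _ ↦ (hp j).2) hr
  have hre_le : ∑ j, |(lam j).re| ≤ δ := calc
    ∑ j, |(lam j).re| ≤ ∑ j, ‖lam j‖ := Finset.sum_le_sum fun j _ ↦ Complex.abs_re_le_norm _
    _ ≤ V * ‖r‖ := hlam
    _ ≤ V * (δ / V) := by gcongr
    _ = δ := by field_simp
  have ha_eq : a = t + (∑ j, (lam j).re • p j + δ • 1) := by
    rw [← hr_re, ← Algebra.algebraMap_eq_smul_one, hr_def]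
    abel
  rw [ha_eq]
  exact ht.add (isPCP_sum_smul_add_smul_one _ (fun j _ ↦ ⟨(hp j).1, (hp j).2⟩) hre_le)
end

section
/- Let (a_i) be a summable sequence of nonnegative reals with sum A, and let (b_i) be a sequence of strictly positive reals with Σ b_i = ∞. Suppose A < ∞. Then there exist N ∈ ℕ and a strictly increasing sequence of indices m₁ < m₂ < ⋯ such that Σ_{i=1}^{m₁} a_i < Σ_{i=1}^{N} b_i and for every k ≥ 1, Σ_{i=m_k+1}^{m_{k+1}} a_i < b_{N+k}. -/
/-- Scalar interleaving lemma: if `(a_i)` is summable with nonnegative terms and `(b_i)` has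
strictly positive terms with divergent series, then there are `N` and a strictly increasing
sequence of indices `m` such that `∑_{i < m 0} a_i < ∑_{i < N} b_i` and for every `k`,
`∑_{m k ≤ i < m (k+1)} a_i < b (N + k)`. -/
theorem exists_interleaving (a b : ℕ → ℝ) (ha : ∀ i, 0 ≤ a i) (hsum : Summable a)
    (hb : ∀ i, 0 < b i)
    (hdiv : Filter.Tendsto (fun n => ∑ i ∈ Finset.range n, b i) Filter.atTop Filter.atTop) :
    ∃ (N : ℕ) (m : ℕ → ℕ), StrictMono m ∧
      (∑ i ∈ Finset.range (m 0), a i < ∑ i ∈ Finset.range N, b i) ∧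
      ∀ k, ∑ i ∈ Finset.Ico (m k) (m (k + 1)), a i < b (N + k) := by
  -- choose N with partial sum of b exceeding the total sum of a
  obtain ⟨N, hN⟩ := (hdiv.eventually (Filter.eventually_gt_atTop (∑' i, a i))).exists
  -- tails of a tend to 0
  set T : ℕ → ℝ := fun n => ∑' k, a (k + n) with hT
  have hTtend : Filter.Tendsto T Filter.atTop (nhds 0) := tendsto_sum_nat_add a
  have hex : ∀ k : ℕ, ∃ n0, ∀ n ≥ n0, T n < b (N + k) := by
    intro k
    have := hTtend.eventually (gt_mem_nhds (hb (N + k)))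
    exact Filter.eventually_atTop.mp this
  choose f hf using hex
  -- define m recursively
  let m : ℕ → ℕ := fun k => Nat.rec (f 0) (fun k mk => max (mk + 1) (f (k + 1))) k
  have hmstep : ∀ k, m (k + 1) = max (m k + 1) (f (k + 1)) := fun k => rfl
  have hmono : StrictMono m := by
    apply strictMono_nat_of_lt_succ
    intro k
    rw [hmstep]
    exact lt_of_lt_of_le (Nat.lt_succ_self _) (le_max_left _ _)
  have hfm : ∀ k, f k ≤ m k := by
    intro k
    cases k with
    | zero => exact le_refl _
    | succ k => rw [hmstep]; exact le_max_right _ _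
  refine ⟨N, m, hmono, ?_, ?_⟩
  · calc ∑ i ∈ Finset.range (m 0), a i ≤ ∑' i, a i :=
          Summable.sum_le_tsum _ (fun i _ => ha i) hsum
      _ < ∑ i ∈ Finset.range N, b i := hN
  · intro k
    have hsum' : Summable (fun i => a (i + m k)) := (summable_nat_add_iff (m k)).mpr hsum
    have h1 : ∑ i ∈ Finset.Ico (m k) (m (k + 1)), a i ≤ T (m k) := by
      rw [Finset.sum_Ico_eq_sum_range]
      calc ∑ i ∈ Finset.range (m (k + 1) - m k), a (m k + i)
          = ∑ i ∈ Finset.range (m (k + 1) - m k), a (i + m k) := by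
            simp [Nat.add_comm]
        _ ≤ ∑' i, a (i + m k) := Summable.sum_le_tsum _ (fun i _ => ha _) hsum'
    exact lt_of_le_of_lt h1 (hf k (m k) (hfm k))
end
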